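/- arXiv:1806.04069 — 3 statements merged into one kernel-verified Lean document; each statement's English description precedes it below -/
import Mathlib

section
/- Let q ∈ (0,1) and y > 0 be fixed. The function g(α) = (1/B(α, yα)) · ∫₀^q (1 − u/q) · u^{α−1} (1−u)^{yα−1} du is strictly decreasing in α on (0, ∞). Equivalently, the quantity 1 − I_q(α, yα) + (1/((1+y)q)) · I_q(α+1, yα) is strictly increasing in α on (0, ∞). (This is Lemma 5: when a user requests a file not in its own cache, the data offloading ratio R_{i,f} increases with the shape parameter α_{i,f} of the approximating beta distribution.) -/
open MeasureTheory Set

/-- The Euler Beta function `B(a,b) = ∫₀¹ t^(a-1) (1-t)^(b-1) dt`. -/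
noncomputable def eulerBeta (a b : ℝ) : ℝ :=
  ∫ t in (0:ℝ)..1, t ^ (a - 1) * (1 - t) ^ (b - 1)

/-- The regularized incomplete beta function
`I_x(a,b) = (1/B(a,b)) ∫₀^x t^(a-1) (1-t)^(b-1) dt`. -/
noncomputable def regIncBeta (x a b : ℝ) : ℝ :=
  (1 / eulerBeta a b) * ∫ t in (0:ℝ)..x, t ^ (a - 1) * (1 - t) ^ (b - 1)

/-!
Write `w_α(u) = u^(α-1) (1-u)^(yα-1)` and `Φ(u) = max (1 - u/q) 0`. Then
`g(α) = ∫₀¹ Φ w_α / B(α, yα)` is the expectation of the convex function `Φ` under the law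
Beta(α, yα), whose mean `1/(1+y)` does not depend on `α`. For `α₁ < α₂` the difference `f` of the
two normalised densities is `ρ - c` times a positive function, where `ρ(u) = u^δ (1-u)^(yδ)` is
unimodal and `c = B(α₂, yα₂) / B(α₁, yα₁)`, a weighted average of `ρ`, lies strictly between `0`
and `max ρ`; so `f` changes sign exactly twice, in the pattern `- + -`, at points `x₁ < x₂`. Having
zero mass and zero mean, `f` integrates every affine function to zero, so `∫ Φ f = ∫ (Φ - L) f` for
the secant `L` of `Φ` through `x₁` and `x₂`. By convexity `Φ - L` has the sign opposite to `f`
everywhere, and it is not identically zero on `(0,1)` because `Φ` has a kink at `q`; hence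
`g(α₂) < g(α₁)`. The second function is `1 - g`, by the recurrence `B(α+1, b) = α/(α+b) B(α, b)`.
-/

open intervalIntegral

noncomputable def betaKernel (a b t : ℝ) : ℝ := t ^ (a - 1) * (1 - t) ^ (b - 1)

section BetaFunction

variable {a b : ℝ}

lemma betaKernel_pos {t : ℝ} (ht : t ∈ Ioo (0:ℝ) 1) : 0 < betaKernel a b t :=
  mul_pos (Real.rpow_pos_of_pos ht.1 _) (Real.rpow_pos_of_pos (sub_pos.2 ht.2) _)

lemma mul_betaKernel {t : ℝ} (ht : 0 ≤ t) (ha : a ≠ 0) :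
    t * betaKernel a b t = betaKernel (a + 1) b t := by
  rw [betaKernel, betaKernel, add_sub_cancel_right, ← mul_assoc, mul_comm t,
    ← Real.rpow_add_one' ht (by simpa using ha), sub_add_cancel]

lemma betaKernel_add {t : ℝ} (ht : t ∈ Ioo (0:ℝ) 1) (d e : ℝ) :
    betaKernel (a + d) (b + e) t = t ^ d * (1 - t) ^ e * betaKernel a b t := by
  simp only [betaKernel]
  rw [add_sub_right_comm, Real.rpow_add ht.1, add_sub_right_comm,
    Real.rpow_add (sub_pos.2 ht.2)]
  ring

lemma ofReal_betaKernel {t : ℝ} (ht : t ∈ Icc (0:ℝ) 1) :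
    (betaKernel a b t : ℂ) = (t : ℂ) ^ ((a : ℂ) - 1) * (1 - (t : ℂ)) ^ ((b : ℂ) - 1) := by
  rw [betaKernel, Complex.ofReal_mul, Complex.ofReal_cpow ht.1,
    Complex.ofReal_cpow (sub_nonneg.2 ht.2)]
  push_cast
  rfl

lemma intervalIntegrable_betaKernel (ha : 0 < a) (hb : 0 < b) :
    IntervalIntegrable (betaKernel a b) volume 0 1 := by
  have h := Complex.betaIntegral_convergent (u := a) (v := b) (by simpa) (by simpa)
  refine (show IntervalIntegrable _ volume 0 1 from ⟨h.1.re, h.2.re⟩).congr fun t ht => ?_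
  rw [uIoc_of_le zero_le_one] at ht
  rw [← ofReal_betaKernel (Ioc_subset_Icc_self ht)]
  exact Complex.ofReal_re _

lemma ofReal_eulerBeta (a b : ℝ) : (eulerBeta a b : ℂ) = Complex.betaIntegral a b := by
  rw [eulerBeta, Complex.betaIntegral, ← intervalIntegral.integral_ofReal]
  refine integral_congr fun t ht => ?_
  rw [uIcc_of_le zero_le_one] at ht
  exact ofReal_betaKernel ht

lemma eulerBeta_eq_Gamma (ha : 0 < a) (hb : 0 < b) :
    eulerBeta a b = Real.Gamma a * Real.Gamma b / Real.Gamma (a + b) := by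
  have h := Complex.Gamma_mul_Gamma_eq_betaIntegral (s := a) (t := b) (by simpa) (by simpa)
  rw [← ofReal_eulerBeta, ← Complex.ofReal_add, Complex.Gamma_ofReal, Complex.Gamma_ofReal,
    Complex.Gamma_ofReal] at h
  rw [eq_div_iff (Real.Gamma_pos_of_pos (add_pos ha hb)).ne']
  exact_mod_cast (h.trans (mul_comm _ _)).symm

lemma eulerBeta_pos (ha : 0 < a) (hb : 0 < b) : 0 < eulerBeta a b := by
  rw [eulerBeta_eq_Gamma ha hb]
  have := Real.Gamma_pos_of_pos ha
  have := Real.Gamma_pos_of_pos hb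
  have := Real.Gamma_pos_of_pos (add_pos ha hb)
  positivity

lemma eulerBeta_add_one_left (ha : 0 < a) (hb : 0 < b) :
    eulerBeta (a + 1) b = a / (a + b) * eulerBeta a b := by
  rw [eulerBeta_eq_Gamma (by linarith) hb, eulerBeta_eq_Gamma ha hb, add_right_comm,
    Real.Gamma_add_one ha.ne', Real.Gamma_add_one (by positivity)]
  have := (Real.Gamma_pos_of_pos (add_pos ha hb)).ne'
  field_simp

lemma integral_mul_betaKernel (ha : 0 < a) {x : ℝ} (hx : 0 ≤ x) :
    ∫ t in (0:ℝ)..x, t * betaKernel a b t = ∫ t in (0:ℝ)..x, betaKernel (a + 1) b t := by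
  refine integral_congr fun t ht => ?_
  rw [uIcc_of_le hx] at ht
  exact mul_betaKernel ht.1 ha.ne'

lemma integral_mul_betaKernel_eq_mul_eulerBeta (ha : 0 < a) (hb : 0 < b) :
    ∫ t in (0:ℝ)..1, t * betaKernel a b t = a / (a + b) * eulerBeta a b := by
  rw [integral_mul_betaKernel ha zero_le_one, ← eulerBeta_add_one_left ha hb]
  rfl

lemma regIncBeta_add_one_left (ha : 0 < a) (hb : 0 < b) {x : ℝ} (hx : 0 ≤ x) :
    regIncBeta x (a + 1) b =
      (a + b) / a * ((1 / eulerBeta a b) * ∫ t in (0:ℝ)..x, t * betaKernel a b t) := by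
  rw [regIncBeta, eulerBeta_add_one_left ha hb, integral_mul_betaKernel ha hx]
  have := (eulerBeta_pos ha hb).ne'
  have : a + b ≠ 0 := by positivity
  field_simp
  rfl

end BetaFunction

section Unimodal

variable {d e : ℝ}

lemma continuous_rpow_mul_one_sub_rpow (hd : 0 ≤ d) (he : 0 ≤ e) :
    Continuous fun t : ℝ => t ^ d * (1 - t) ^ e :=
  (Real.continuous_rpow_const hd).mul ((Real.continuous_rpow_const he).comp (by fun_prop))

lemma hasDerivAt_rpow_mul_one_sub_rpow {t : ℝ} (ht : t ∈ Ioo (0:ℝ) 1) :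
    HasDerivAt (fun t : ℝ => t ^ d * (1 - t) ^ e)
      (t ^ (d - 1) * (1 - t) ^ (e - 1) * (d - (d + e) * t)) t := by
  have h1t : 1 - t ≠ 0 := (sub_pos.2 ht.2).ne'
  have hleft := Real.hasDerivAt_rpow_const (p := d) (Or.inl ht.1.ne')
  have hright := ((hasDerivAt_id t).const_sub 1).rpow_const (p := e) (Or.inl h1t)
  refine (hleft.mul hright).congr_deriv ?_
  have hd : t ^ d = t ^ (d - 1) * t := by rw [← Real.rpow_add_one ht.1.ne', sub_add_cancel]
  have he : (1 - t) ^ e = (1 - t) ^ (e - 1) * (1 - t) := by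
    rw [← Real.rpow_add_one h1t, sub_add_cancel]
  simp only [id, hd, he]
  ring

lemma strictMonoOn_rpow_mul_one_sub_rpow (hd : 0 < d) (he : 0 < e) :
    StrictMonoOn (fun t : ℝ => t ^ d * (1 - t) ^ e) (Icc 0 (d / (d + e))) := by
  refine strictMonoOn_of_deriv_pos (convex_Icc _ _)
    (continuous_rpow_mul_one_sub_rpow hd.le he.le).continuousOn fun t ht => ?_
  rw [interior_Icc] at ht
  have hde : 0 < d + e := add_pos hd he
  have ht1 : t < 1 := ht.2.trans ((div_lt_one hde).2 (by linarith))
  rw [(hasDerivAt_rpow_mul_one_sub_rpow ⟨ht.1, ht1⟩).deriv]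
  have := (lt_div_iff₀ hde).1 ht.2
  have := Real.rpow_pos_of_pos ht.1 (d - 1)
  have := Real.rpow_pos_of_pos (sub_pos.2 ht1) (e - 1)
  exact mul_pos (by positivity) (by linarith)

lemma strictAntiOn_rpow_mul_one_sub_rpow (hd : 0 < d) (he : 0 < e) :
    StrictAntiOn (fun t : ℝ => t ^ d * (1 - t) ^ e) (Icc (d / (d + e)) 1) := by
  refine strictAntiOn_of_deriv_neg (convex_Icc _ _)
    (continuous_rpow_mul_one_sub_rpow hd.le he.le).continuousOn fun t ht => ?_
  rw [interior_Icc] at ht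
  have hde : 0 < d + e := add_pos hd he
  have ht0 : 0 < t := (div_pos hd hde).trans ht.1
  rw [(hasDerivAt_rpow_mul_one_sub_rpow ⟨ht0, ht.2⟩).deriv]
  have := (div_lt_iff₀ hde).1 ht.1
  have := Real.rpow_pos_of_pos ht0 (d - 1)
  have := Real.rpow_pos_of_pos (sub_pos.2 ht.2) (e - 1)
  exact mul_neg_of_pos_of_neg (by positivity) (by linarith)

end Unimodal

lemma exists_sign_pattern_of_unimodal {ρ : ℝ → ℝ} {l m r c : ℝ} (hlm : l ≤ m) (hmr : m ≤ r)
    (hρ : ContinuousOn ρ (Icc l r)) (hmono : StrictMonoOn ρ (Icc l m))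
    (hanti : StrictAntiOn ρ (Icc m r)) (hl : ρ l < c) (hr : ρ r < c) (hm : c < ρ m) :
    ∃ x₁ x₂, x₁ < x₂ ∧ ∀ u ∈ Icc l r \ {x₁, x₂}, (ρ u - c) * ((u - x₁) * (u - x₂)) < 0 := by
  obtain ⟨a, ⟨hla, ham⟩, rfl⟩ :=
    intermediate_value_Ioo hlm (hρ.mono (Icc_subset_Icc_right hmr)) ⟨hl, hm⟩
  obtain ⟨b, ⟨hmb, hbr⟩, hb⟩ :=
    intermediate_value_Ioo' hmr (hρ.mono (Icc_subset_Icc_left hlm)) ⟨hr, hm⟩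
  refine ⟨a, b, ham.trans hmb, fun u ⟨⟨hlu, hur⟩, hab⟩ => ?_⟩
  simp only [mem_insert_iff, mem_singleton_iff, not_or] at hab
  rcases lt_or_gt_of_ne hab.1 with hua | hau
  · have : ρ u < ρ a := hmono ⟨hlu, (hua.trans ham).le⟩ ⟨hla.le, ham.le⟩ hua
    exact mul_neg_of_neg_of_pos (by linarith) (mul_pos_of_neg_of_neg (by linarith) (by linarith))
  rcases lt_or_gt_of_ne hab.2 with hub | hbu
  · have : ρ a < ρ u := by
      rcases le_total u m with hum | hmu
      · exact hmono ⟨hla.le, ham.le⟩ ⟨hlu, hum⟩ hau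
      · exact hb ▸ hanti ⟨hmu, (hub.trans hbr).le⟩ ⟨hmb.le, hbr.le⟩ hub
    exact mul_neg_of_pos_of_neg (by linarith) (mul_neg_of_pos_of_neg (by linarith) (by linarith))
  · have : ρ u < ρ b := hanti ⟨hmb.le, hbr.le⟩ ⟨(hmb.trans hbu).le, hur⟩ hbu
    exact mul_neg_of_neg_of_pos (by linarith) (mul_pos (by linarith) (by linarith))

lemma intervalIntegral_pos_of_nonneg_of_pos_on_open {f : ℝ → ℝ} {l r : ℝ} {U : Set ℝ}
    (hfi : IntervalIntegrable f volume l r) (hnonneg : ∀ x ∈ Ioo l r, 0 ≤ f x)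
    (hU : IsOpen U) (hUne : U.Nonempty) (hUlr : U ⊆ Ioo l r) (hpos : ∀ x ∈ U, 0 < f x) :
    0 < ∫ x in l..r, f x := by
  obtain ⟨x, hx⟩ := hUne
  have hlr : l < r := (hUlr hx).1.trans (hUlr hx).2
  have h₀ : 0 ≤ᵐ[volume.restrict (uIoc l r)] f := by
    rw [uIoc_of_le hlr.le]
    refine ae_restrict_of_ae_eq_of_ae_restrict Ioo_ae_eq_Ioc ?_
    exact (ae_restrict_iff' measurableSet_Ioo).2 (Filter.Eventually.of_forall hnonneg)
  rw [integral_pos_iff_support_of_nonneg_ae' h₀ hfi]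
  exact ⟨hlr, (hU.measure_pos volume ⟨x, hx⟩).trans_le <| measure_mono fun y hy =>
    ⟨(hpos y hy).ne', Ioo_subset_Ioc_self (hUlr hy)⟩⟩

lemma ConvexOn.sub_secant_mul_nonneg {Φ : ℝ → ℝ} (hΦ : ConvexOn ℝ univ Φ) {a b : ℝ}
    (hab : a < b) (u : ℝ) :
    0 ≤ (Φ u - (Φ a + (Φ b - Φ a) / (b - a) * (u - a))) * ((u - a) * (u - b)) := by
  rcases lt_trichotomy u a with hua | rfl | hau
  · have h := hΦ.secant_mono (mem_univ a) (mem_univ u) (mem_univ b) hua.ne hab.ne'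
      (hua.trans hab).le
    rw [div_le_iff_of_neg (sub_neg.2 hua)] at h
    exact mul_nonneg (by linarith) (mul_nonneg_of_nonpos_of_nonpos (by linarith) (by linarith))
  · simp
  rcases le_or_gt u b with hub | hbu
  · have h := hΦ.secant_mono (mem_univ a) (mem_univ u) (mem_univ b) hau.ne' hab.ne' hub
    rw [div_le_iff₀ (sub_pos.2 hau)] at h
    exact mul_nonneg_of_nonpos_of_nonpos (by linarith)
      (mul_nonpos_of_nonneg_of_nonpos (by linarith) (by linarith))
  · have h := hΦ.secant_mono (mem_univ a) (mem_univ b) (mem_univ u) hab.ne' hau.ne' hbu.le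
    rw [le_div_iff₀ (sub_pos.2 hau)] at h
    exact mul_nonneg (by linarith) (mul_nonneg (by linarith) (by linarith))

theorem integral_convex_mul_neg_of_sign_pattern {Φ f : ℝ → ℝ} {a b : ℝ} (hab : a < b)
    (hΦ : ConvexOn ℝ univ Φ) (hΦc : Continuous Φ)
    (hΦaff : ∀ s k : ℝ, ∃ x ∈ Ioo (0:ℝ) 1, Φ x ≠ s + k * x)
    (hf : IntervalIntegrable f volume 0 1)
    (hsign : ∀ u ∈ Ioo (0:ℝ) 1 \ {a, b}, f u * ((u - a) * (u - b)) < 0)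
    (hf0 : ∫ u in (0:ℝ)..1, f u = 0) (hf1 : ∫ u in (0:ℝ)..1, u * f u = 0) :
    ∫ u in (0:ℝ)..1, Φ u * f u < 0 := by
  set k := (Φ b - Φ a) / (b - a)
  set L : ℝ → ℝ := fun u => Φ a + k * (u - a)
  have hLa : L a = Φ a := by simp [L]
  have hLb : L b = Φ b := by
    simp only [L, k]
    field_simp [(sub_pos.2 hab).ne']
    ring
  have hL : Continuous L := by fun_prop
  have hpos : ∀ u ∈ Ioo (0:ℝ) 1, Φ u ≠ L u → 0 < (L u - Φ u) * f u := by
    intro u hu hΦL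
    have hua : u ≠ a := by rintro rfl; exact hΦL hLa.symm
    have hub : u ≠ b := by rintro rfl; exact hΦL hLb.symm
    have hP : (u - a) * (u - b) ≠ 0 := mul_ne_zero (sub_ne_zero.2 hua) (sub_ne_zero.2 hub)
    have hDP : 0 < (Φ u - L u) * ((u - a) * (u - b)) :=
      (hΦ.sub_secant_mul_nonneg hab u).lt_of_ne' (mul_ne_zero (sub_ne_zero.2 hΦL) hP)
    have hfP := hsign u ⟨hu, by simp [hua, hub]⟩
    nlinarith [mul_neg_of_pos_of_neg hDP hfP, sq_pos_of_ne_zero hP]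
  have hint : ∫ u in (0:ℝ)..1, (L u - Φ u) * f u = -∫ u in (0:ℝ)..1, Φ u * f u := by
    have hΦf := hf.continuousOn_mul hΦc.continuousOn
    have huf : IntervalIntegrable (fun u => u * f u) volume 0 1 :=
      hf.continuousOn_mul continuousOn_id
    calc ∫ u in (0:ℝ)..1, (L u - Φ u) * f u
        = ∫ u in (0:ℝ)..1, ((Φ a - k * a) * f u + k * (u * f u)) - Φ u * f u :=
          integral_congr fun u _ => by simp only [L]; ring
      _ = -∫ u in (0:ℝ)..1, Φ u * f u := by
          rw [integral_sub ((hf.const_mul _).add (huf.const_mul _)) hΦf,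
            integral_add (hf.const_mul _) (huf.const_mul _), intervalIntegral.integral_const_mul,
            intervalIntegral.integral_const_mul, hf0, hf1]
          ring
  have key : 0 < ∫ u in (0:ℝ)..1, (L u - Φ u) * f u := by
    obtain ⟨x, hx, hΦx⟩ := hΦaff (Φ a - k * a) k
    refine intervalIntegral_pos_of_nonneg_of_pos_on_open
      (U := Ioo 0 1 ∩ {u | Φ u ≠ L u}) (hf.continuousOn_mul (hL.sub hΦc).continuousOn)
      (fun u hu => ?_) (isOpen_Ioo.inter (isOpen_ne_fun hΦc hL)) ⟨x, hx, ?_⟩ inter_subset_left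
      (fun u hu => hpos u hu.1 hu.2)
    · by_cases hΦL : Φ u = L u
      · simp [hΦL]
      · exact (hpos u hu hΦL).le
    · simp only [mem_ofPred_eq, L]; convert hΦx using 1; ring
  linarith

lemma eulerBeta_div_eulerBeta_lt {a b d e : ℝ} (ha : 0 < a) (hb : 0 < b) (hd : 0 < d)
    (he : 0 < e) :
    eulerBeta (a + d) (b + e) / eulerBeta a b < (d / (d + e)) ^ d * (1 - d / (d + e)) ^ e := by
  set ρ : ℝ → ℝ := fun t => t ^ d * (1 - t) ^ e
  set m := d / (d + e)
  set c := eulerBeta (a + d) (b + e) / eulerBeta a b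
  have hm1 : m < 1 := (div_lt_one (by linarith)).2 (by linarith)
  have hρmono := strictMonoOn_rpow_mul_one_sub_rpow hd he
  have hρanti := strictAntiOn_rpow_mul_one_sub_rpow hd he
  show c < ρ m
  by_contra! hρm
  have hle : ∀ u ∈ Ioo (0:ℝ) 1, ρ u ≤ c := fun u hu => by
    rcases le_total u m with hum | hmu
    · exact (hρmono.monotoneOn ⟨hu.1.le, hum⟩ ⟨(hu.1.trans_le hum).le, le_rfl⟩ hum).trans hρm
    · exact (hρanti.antitoneOn ⟨le_rfl, hmu.trans hu.2.le⟩ ⟨hmu, hu.2.le⟩ hmu).trans hρm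
  have hint : ∫ u in (0:ℝ)..1, (c - ρ u) * betaKernel a b u = 0 := calc
    _ = ∫ u in (0:ℝ)..1, c * betaKernel a b u - betaKernel (a + d) (b + e) u :=
        integral_congr_Ioo_of_le zero_le_one fun u hu => by rw [betaKernel_add hu]; ring
    _ = c * eulerBeta a b - eulerBeta (a + d) (b + e) := by
        rw [integral_sub ((intervalIntegrable_betaKernel ha hb).const_mul c)
          (intervalIntegrable_betaKernel (by linarith) (by linarith)),
          intervalIntegral.integral_const_mul]
        rfl
    _ = 0 := by rw [div_mul_cancel₀ _ (eulerBeta_pos ha hb).ne', sub_self]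
  refine hint.not_gt (intervalIntegral_pos_of_nonneg_of_pos_on_open (U := Ioo 0 m) ?_
    (fun u hu => mul_nonneg (sub_nonneg.2 (hle u hu)) (betaKernel_pos hu).le) isOpen_Ioo
    (nonempty_Ioo.2 (by positivity)) (Ioo_subset_Ioo_right hm1.le) fun u hu => ?_)
  · exact (intervalIntegrable_betaKernel ha hb).continuousOn_mul
      (continuous_const.sub (continuous_rpow_mul_one_sub_rpow hd.le he.le)).continuousOn
  · have := hρmono ⟨hu.1.le, hu.2.le⟩ ⟨(hu.1.trans hu.2).le, le_rfl⟩ hu.2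
    exact mul_pos (by linarith) (betaKernel_pos ⟨hu.1, hu.2.trans hm1⟩)

lemma exists_sign_pattern_betaKernel_div_sub {a₁ b₁ a₂ b₂ : ℝ} (ha₁ : 0 < a₁) (hb₁ : 0 < b₁)
    (ha : a₁ < a₂) (hb : b₁ < b₂) :
    ∃ x₁ x₂, x₁ < x₂ ∧ ∀ u ∈ Ioo (0:ℝ) 1 \ {x₁, x₂},
      (betaKernel a₂ b₂ u / eulerBeta a₂ b₂ - betaKernel a₁ b₁ u / eulerBeta a₁ b₁) *
        ((u - x₁) * (u - x₂)) < 0 := by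
  obtain ⟨d, hd, rfl⟩ : ∃ d, 0 < d ∧ a₂ = a₁ + d := ⟨a₂ - a₁, by linarith, by ring⟩
  obtain ⟨e, he, rfl⟩ : ∃ e, 0 < e ∧ b₂ = b₁ + e := ⟨b₂ - b₁, by linarith, by ring⟩
  have hB₂ := eulerBeta_pos (ha₁.trans ha) (hb₁.trans hb)
  have hc := div_pos hB₂ (eulerBeta_pos ha₁ hb₁)
  obtain ⟨x₁, x₂, h12, hsign⟩ := exists_sign_pattern_of_unimodal (by positivity)
    ((div_lt_one (by linarith)).2 (by linarith)).le
    (continuous_rpow_mul_one_sub_rpow hd.le he.le).continuousOn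
    (strictMonoOn_rpow_mul_one_sub_rpow hd he) (strictAntiOn_rpow_mul_one_sub_rpow hd he)
    (by simpa [Real.zero_rpow hd.ne'] using hc) (by simpa [Real.zero_rpow he.ne'] using hc)
    (eulerBeta_div_eulerBeta_lt ha₁ hb₁ hd he)
  refine ⟨x₁, x₂, h12, fun u hu => ?_⟩
  have hdiff : betaKernel (a₁ + d) (b₁ + e) u / eulerBeta (a₁ + d) (b₁ + e) -
        betaKernel a₁ b₁ u / eulerBeta a₁ b₁ =
      (u ^ d * (1 - u) ^ e - eulerBeta (a₁ + d) (b₁ + e) / eulerBeta a₁ b₁) *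
        (betaKernel a₁ b₁ u / eulerBeta (a₁ + d) (b₁ + e)) := by
    rw [betaKernel_add hu.1]
    field_simp
  rw [hdiff, mul_right_comm]
  exact mul_neg_of_neg_of_pos (hsign u ⟨Ioo_subset_Icc_self hu.1, hu.2⟩)
    (div_pos (betaKernel_pos hu.1) hB₂)

theorem integral_convex_mul_betaKernel_div_eulerBeta_lt {Φ : ℝ → ℝ} (hΦ : ConvexOn ℝ univ Φ)
    (hΦc : Continuous Φ) (hΦaff : ∀ s k : ℝ, ∃ x ∈ Ioo (0:ℝ) 1, Φ x ≠ s + k * x)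
    {a₁ b₁ a₂ b₂ : ℝ} (ha₁ : 0 < a₁) (hb₁ : 0 < b₁) (ha : a₁ < a₂) (hb : b₁ < b₂)
    (hmean : a₁ / (a₁ + b₁) = a₂ / (a₂ + b₂)) :
    (∫ u in (0:ℝ)..1, Φ u * betaKernel a₂ b₂ u) / eulerBeta a₂ b₂ <
      (∫ u in (0:ℝ)..1, Φ u * betaKernel a₁ b₁ u) / eulerBeta a₁ b₁ := by
  have ha₂ : 0 < a₂ := ha₁.trans ha
  have hb₂ : 0 < b₂ := hb₁.trans hb
  have hk₁ := intervalIntegrable_betaKernel ha₁ hb₁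
  have hk₂ := intervalIntegrable_betaKernel ha₂ hb₂
  have hB₁ := (eulerBeta_pos ha₁ hb₁).ne'
  have hB₂ := (eulerBeta_pos ha₂ hb₂).ne'
  obtain ⟨x₁, x₂, h12, hsign⟩ := exists_sign_pattern_betaKernel_div_sub ha₁ hb₁ ha hb
  have hf := (hk₂.div_const (eulerBeta a₂ b₂)).sub (hk₁.div_const (eulerBeta a₁ b₁))
  have hlin : ∀ g : ℝ → ℝ, Continuous g →
      ∫ u in (0:ℝ)..1, g u * (betaKernel a₂ b₂ u / eulerBeta a₂ b₂ -
        betaKernel a₁ b₁ u / eulerBeta a₁ b₁) =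
      (∫ u in (0:ℝ)..1, g u * betaKernel a₂ b₂ u) / eulerBeta a₂ b₂ -
        (∫ u in (0:ℝ)..1, g u * betaKernel a₁ b₁ u) / eulerBeta a₁ b₁ := fun g hg => by
    simp only [mul_sub, mul_div_assoc']
    rw [integral_sub ((hk₂.continuousOn_mul hg.continuousOn).div_const _)
      ((hk₁.continuousOn_mul hg.continuousOn).div_const _), intervalIntegral.integral_div,
      intervalIntegral.integral_div]
  have hmass := hlin 1 continuous_const
  have hmoment := hlin id continuous_id
  simp only [Pi.one_apply, one_mul, id] at hmass hmoment
  rw [← sub_neg, ← hlin Φ hΦc]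
  refine integral_convex_mul_neg_of_sign_pattern h12 hΦ hΦc hΦaff hf hsign ?_ ?_
  · rw [hmass]
    exact sub_eq_zero.2 ((div_self hB₂).trans (div_self hB₁).symm)
  · rw [hmoment, integral_mul_betaKernel_eq_mul_eulerBeta ha₁ hb₁, integral_mul_betaKernel_eq_mul_eulerBeta ha₂ hb₂,
      mul_div_cancel_right₀ _ hB₁, mul_div_cancel_right₀ _ hB₂, hmean, sub_self]

lemma convexOn_max_one_sub_div_zero (q : ℝ) :
    ConvexOn ℝ univ fun u : ℝ => max (1 - u / q) 0 := by
  have h : ConvexOn ℝ univ fun u : ℝ => 1 - u / q :=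
    ⟨convex_univ, fun x _ z _ a b _ _ hab =>
      le_of_eq (by simp only [smul_eq_mul]; linear_combination -hab)⟩
  exact h.sup (convexOn_const 0 convex_univ)

lemma exists_max_one_sub_div_zero_ne_affine {q : ℝ} (hq : q ∈ Ioo (0:ℝ) 1) (s k : ℝ) :
    ∃ x ∈ Ioo (0:ℝ) 1, max (1 - x / q) 0 ≠ s + k * x := by
  obtain ⟨hq0, hq1⟩ := hq
  by_contra! h
  have h₁ := h (q / 2) ⟨by positivity, by linarith⟩
  have h₂ := h q ⟨hq0, hq1⟩
  have h₃ := h ((1 + q) / 2) ⟨by positivity, by linarith⟩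
  rw [max_eq_left (by rw [sub_nonneg, div_le_one hq0]; linarith)] at h₁
  rw [div_self hq0.ne', sub_self, max_self] at h₂
  rw [max_eq_right (by rw [sub_nonpos, le_div_iff₀ hq0]; linarith)] at h₃
  field_simp at h₁
  nlinarith

lemma integral_max_one_sub_div_zero_mul {q : ℝ} (hq : q ∈ Ioo (0:ℝ) 1) {k : ℝ → ℝ}
    (hk : IntervalIntegrable k volume 0 1) :
    ∫ u in (0:ℝ)..1, max (1 - u / q) 0 * k u = ∫ u in (0:ℝ)..q, (1 - u / q) * k u := by
  obtain ⟨hq0, hq1⟩ := hq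
  have hΦk : IntervalIntegrable (fun u => max (1 - u / q) 0 * k u) volume 0 1 :=
    hk.continuousOn_mul (by fun_prop)
  have hqI : q ∈ uIcc (0:ℝ) 1 := mem_uIcc_of_le hq0.le hq1.le
  have hright : ∫ u in q..1, max (1 - u / q) 0 * k u = 0 := by
    refine (integral_congr fun u hu => ?_).trans integral_zero
    rw [uIcc_of_le hq1.le] at hu
    have : 1 - u / q ≤ 0 := by rw [sub_nonpos, le_div_iff₀ hq0]; linarith [hu.1]
    rw [max_eq_right this, zero_mul]
  rw [← integral_add_adjacent_intervals (hΦk.mono_set (uIcc_subset_uIcc left_mem_uIcc hqI))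
    (hΦk.mono_set (uIcc_subset_uIcc hqI right_mem_uIcc)), hright, add_zero]
  refine integral_congr fun u hu => ?_
  rw [uIcc_of_le hq0.le] at hu
  simp only [max_eq_left (show 0 ≤ 1 - u / q by rw [sub_nonneg, div_le_one hq0]; exact hu.2)]

lemma one_sub_regIncBeta_add_regIncBeta_add_one {q y α : ℝ} (hq : q ∈ Ioo (0:ℝ) 1) (hy : 0 < y)
    (hα : 0 < α) :
    1 - regIncBeta q α (y * α) + (1 / ((1 + y) * q)) * regIncBeta q (α + 1) (y * α) =
      1 - (1 / eulerBeta α (y * α)) * ∫ u in (0:ℝ)..q, (1 - u / q) * betaKernel α (y * α) u := by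
  obtain ⟨hq0, hq1⟩ := hq
  have hk : IntervalIntegrable (betaKernel α (y * α)) volume 0 q :=
    (intervalIntegrable_betaKernel hα (mul_pos hy hα)).mono_set
      (uIcc_subset_uIcc left_mem_uIcc (mem_uIcc_of_le hq0.le hq1.le))
  have hsplit : ∫ u in (0:ℝ)..q, (1 - u / q) * betaKernel α (y * α) u =
      (∫ u in (0:ℝ)..q, betaKernel α (y * α) u) -
        (∫ u in (0:ℝ)..q, u * betaKernel α (y * α) u) / q := by
    have hmk : IntervalIntegrable (fun u => u * betaKernel α (y * α) u) volume 0 q :=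
      hk.continuousOn_mul continuousOn_id
    rw [← intervalIntegral.integral_div, ← integral_sub hk (hmk.div_const q)]
    exact integral_congr fun u _ => by ring
  rw [regIncBeta_add_one_left hα (mul_pos hy hα) hq0.le, hsplit, regIncBeta]
  simp only [betaKernel]
  have := (eulerBeta_pos hα (mul_pos hy hα)).ne'
  field_simp
  ring

/-- Lemma 5: for fixed `q ∈ (0,1)` and `y > 0`, the function
`g(α) = (1/B(α, yα)) ∫₀^q (1 - u/q) u^(α-1) (1-u)^(yα-1) du` is strictly decreasing
on `(0,∞)`; equivalently, `1 - I_q(α, yα) + (1/((1+y)q)) I_q(α+1, yα)` is strictly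
increasing on `(0,∞)`. -/
theorem data_offloading_ratio_increases_with_alpha
    (q y : ℝ) (hq : q ∈ Set.Ioo (0:ℝ) 1) (hy : 0 < y) :
    StrictAntiOn (fun α : ℝ =>
      (1 / eulerBeta α (y * α)) *
        ∫ u in (0:ℝ)..q, (1 - u / q) * u ^ (α - 1) * (1 - u) ^ (y * α - 1))
      (Set.Ioi 0)
    ∧
    StrictMonoOn (fun α : ℝ =>
      1 - regIncBeta q α (y * α) + (1 / ((1 + y) * q)) * regIncBeta q (α + 1) (y * α))
      (Set.Ioi 0) := by
  have hkernel : ∀ α : ℝ, ∫ u in (0:ℝ)..q, (1 - u / q) * u ^ (α - 1) * (1 - u) ^ (y * α - 1) =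
      ∫ u in (0:ℝ)..q, (1 - u / q) * betaKernel α (y * α) u := fun α => by
    simp only [betaKernel, mul_assoc]
  have hanti : StrictAntiOn (fun α : ℝ =>
      (1 / eulerBeta α (y * α)) * ∫ u in (0:ℝ)..q, (1 - u / q) * betaKernel α (y * α) u)
      (Ioi 0) := by
    intro α₁ (h₁ : 0 < α₁) α₂ (h₂ : 0 < α₂) h12
    simp only [one_div_mul_eq_div, ← integral_max_one_sub_div_zero_mul hq
      (intervalIntegrable_betaKernel h₁ (mul_pos hy h₁)),
      ← integral_max_one_sub_div_zero_mul hq (intervalIntegrable_betaKernel h₂ (mul_pos hy h₂))]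
    refine integral_convex_mul_betaKernel_div_eulerBeta_lt (convexOn_max_one_sub_div_zero q)
      (by fun_prop) (exists_max_one_sub_div_zero_ne_affine hq) h₁ (mul_pos hy h₁) h12
      (by gcongr) ?_
    field_simp
  simp only [hkernel]
  refine ⟨hanti, fun α₁ h₁ α₂ h₂ h12 => ?_⟩
  simp only [one_sub_regIncBeta_add_regIncBeta_add_one hq hy h₁,
    one_sub_regIncBeta_add_regIncBeta_add_one hq hy h₂]
  linarith [hanti h₁ h₂ h12]
end

section
/- Let T > 0. The function h(x) = (T x − 1 + e^{−T x}) / x² is strictly decreasing on (0, ∞). (This expresses that each summand (1/(μκ))(τ₀ − 1/(μκ) + e^{−μκτ₀}/(μκ)) of the communication-duration variance in Lemma 3 is strictly decreasing in the speed scaling factor μ.) -/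
/-!
Substituting `u = T x` gives `h x = T² φ (T x)` with `φ u = (u - 1 + e^{-u}) / u²`, so it suffices
that `φ` is strictly decreasing on `(0, ∞)`. Its derivative is `-(u + (u + 2) e^{-u} - 2) / u³`, and
the numerator `u + (u + 2) e^{-u} - 2` vanishes at `0` and increases, its derivative
`1 - (1 + u) e^{-u}` being positive by `1 + u < e^u`.
-/

open Real Set

lemma hasDerivAt_add_add_two_mul_exp_neg (u : ℝ) :
    HasDerivAt (fun v : ℝ => v + (v + 2) * exp (-v)) (1 - (1 + u) * exp (-u)) u := by
  have hexp : HasDerivAt (fun v : ℝ => exp (-v)) (-exp (-u)) u := by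
    simpa using (hasDerivAt_neg u).exp
  exact ((hasDerivAt_id' u).add (((hasDerivAt_id' u).add_const 2).mul hexp)).congr_deriv (by ring)

lemma one_add_mul_exp_neg_lt_one {u : ℝ} (hu : u ≠ 0) : (1 + u) * exp (-u) < 1 := by
  rw [exp_neg, ← div_eq_mul_inv, div_lt_one (exp_pos u), add_comm]
  exact add_one_lt_exp hu

lemma two_lt_add_add_two_mul_exp_neg {u : ℝ} (hu : 0 < u) : 2 < u + (u + 2) * exp (-u) := by
  have hmono : StrictMonoOn (fun v : ℝ => v + (v + 2) * exp (-v)) (Ici 0) := by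
    refine strictMonoOn_of_deriv_pos (convex_Ici 0)
      (fun v _ => (hasDerivAt_add_add_two_mul_exp_neg v).continuousAt.continuousWithinAt) ?_
    intro v hv
    rw [interior_Ici] at hv
    rw [(hasDerivAt_add_add_two_mul_exp_neg v).deriv, sub_pos]
    exact one_add_mul_exp_neg_lt_one hv.ne'
  simpa using hmono self_mem_Ici hu.le hu

lemma hasDerivAt_sub_one_add_exp_neg_div_sq {u : ℝ} (hu : u ≠ 0) :
    HasDerivAt (fun v : ℝ => (v - 1 + exp (-v)) / v ^ 2)
      (-(u + (u + 2) * exp (-u) - 2) / u ^ 3) u := by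
  have hnum : HasDerivAt (fun v : ℝ => v - 1 + exp (-v)) (1 - exp (-u)) u :=
    (((hasDerivAt_id' u).sub_const 1).add (hasDerivAt_neg u).exp).congr_deriv (by ring)
  refine (hnum.div (hasDerivAt_pow 2 u) (pow_ne_zero 2 hu)).congr_deriv ?_
  field_simp
  ring

lemma strictAntiOn_sub_one_add_exp_neg_div_sq :
    StrictAntiOn (fun u : ℝ => (u - 1 + exp (-u)) / u ^ 2) (Ioi 0) := by
  refine strictAntiOn_of_deriv_neg (convex_Ioi 0)
    (fun u hu => (hasDerivAt_sub_one_add_exp_neg_div_sq hu.ne').continuousAt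
      |>.continuousWithinAt) ?_
  intro u hu
  rw [interior_Ioi] at hu
  rw [(hasDerivAt_sub_one_add_exp_neg_div_sq hu.ne').deriv, neg_div, neg_lt_zero]
  have hgt := two_lt_add_add_two_mul_exp_neg hu
  exact div_pos (by linarith) (pow_pos hu 3)

/-- for `T > 0`, the function `h(x) = (Tx - 1 + e^(-Tx))/x²` is
strictly decreasing on `(0, ∞)`. -/
theorem variance_summand_strictAnti (T : ℝ) (hT : 0 < T) :
    StrictAntiOn (fun x : ℝ => (T * x - 1 + Real.exp (-(T * x))) / x ^ 2)
      (Set.Ioi 0) := by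
  have hscale : (fun x : ℝ => (T * x - 1 + exp (-(T * x))) / x ^ 2) =
      fun x => T ^ 2 * ((T * x - 1 + exp (-(T * x))) / (T * x) ^ 2) := by
    funext x
    rcases eq_or_ne x 0 with rfl | hx
    · simp
    · field_simp
  rw [hscale]
  intro a ha b hb hab
  have hTa : 0 < T * a := mul_pos hT ha
  have hTb : 0 < T * b := mul_pos hT hb
  exact mul_lt_mul_of_pos_left
    (strictAntiOn_sub_one_add_exp_neg_div_sq hTa hTb (mul_lt_mul_of_pos_left hab hT)) (by positivity)
end

section
/- Let τ₀ > 0, let a₀ > 0, let Z range over a finite nonempty index set, and for each Z let a_Z ≥ 0 and κ_Z > 0, with a_Z > 0 for at least one index Z. Then the function V(μ) = 2 a₀ Σ_Z (a_Z/(μ κ_Z)) · (τ₀ − 1/(μ κ_Z) + e^{−μ κ_Z τ₀}/(μ κ_Z)) is strictly decreasing on μ ∈ (0, ∞). (This is Lemma 4: when all user speeds are scaled by μ, the variance Var[τ^c_{i,f}(μ)] of the communication duration, given by the finite-sum expression of Lemma 3, strictly decreases in μ, while the expectation is unchanged.) -/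
/-!
Writing `g(u) = (1/u)(τ₀ - 1/u + e^{-uτ₀}/u)`, each summand of the variance is `a_Z g(μ κ_Z)`,
so it suffices that `g` is strictly decreasing on `(0, ∞)`. Its derivative is
`u⁻³ (2 - t - (t + 2) e^{-t})` with `t = uτ₀`, and the bracket vanishes at `t = 0` with derivative
`(t + 1) e^{-t} - 1 < 0`, by `t + 1 < e^t`.
-/

open Finset Real

lemma add_one_mul_exp_neg_lt_one {t : ℝ} (ht : t ≠ 0) : (t + 1) * exp (-t) < 1 := by
  calc (t + 1) * exp (-t) < exp t * exp (-t) :=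
        mul_lt_mul_of_pos_right (add_one_lt_exp ht) (exp_pos _)
    _ = 1 := by rw [← exp_add, add_neg_cancel, exp_zero]

lemma two_sub_sub_add_two_mul_exp_neg_neg {t : ℝ} (ht : 0 < t) :
    2 - t - (t + 2) * exp (-t) < 0 := by
  have hderiv (s : ℝ) : HasDerivAt (fun s : ℝ => 2 - s - (s + 2) * exp (-s))
      ((s + 1) * exp (-s) - 1) s := by
    refine (((hasDerivAt_const s 2).sub (hasDerivAt_id s)).sub
      (((hasDerivAt_id s).add_const 2).mul (hasDerivAt_neg s).exp)).congr_deriv ?_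
    simp only [id]
    ring
  have hanti : StrictAntiOn (fun s : ℝ => 2 - s - (s + 2) * exp (-s)) (Set.Ici 0) := by
    refine strictAntiOn_of_deriv_neg (convex_Ici 0) (by fun_prop) fun s hs => ?_
    rw [interior_Ici, Set.mem_Ioi] at hs
    rw [(hderiv s).deriv, sub_neg]
    exact add_one_mul_exp_neg_lt_one hs.ne'
  simpa using hanti Set.self_mem_Ici ht.le ht

lemma strictAntiOn_inv_mul_sub_inv_add_exp_neg_div {τ₀ : ℝ} (hτ₀ : 0 < τ₀) :
    StrictAntiOn (fun u : ℝ => 1 / u * (τ₀ - 1 / u + exp (-(u * τ₀)) / u)) (Set.Ioi 0) := by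
  have hderiv {u : ℝ} (hu : 0 < u) : HasDerivAt
      (fun u : ℝ => 1 / u * (τ₀ - 1 / u + exp (-(u * τ₀)) / u))
      ((u ^ 3)⁻¹ * (2 - u * τ₀ - (u * τ₀ + 2) * exp (-(u * τ₀)))) u := by
    have hinv : HasDerivAt (fun u : ℝ => 1 / u) (-(u ^ 2)⁻¹) u := by
      simpa only [one_div] using hasDerivAt_inv hu.ne'
    have hexp : HasDerivAt (fun u : ℝ => exp (-(u * τ₀))) (exp (-(u * τ₀)) * -τ₀) u := by
      simpa using ((hasDerivAt_id u).mul_const τ₀).neg.exp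
    refine (hinv.mul (((hasDerivAt_const u τ₀).sub hinv).add
      (hexp.div (hasDerivAt_id u) hu.ne'))).congr_deriv ?_
    simp only [id, Pi.sub_apply, Pi.add_apply, Pi.div_apply]
    field_simp
    ring
  refine strictAntiOn_of_deriv_neg (convex_Ioi 0)
    (fun u hu => (hderiv hu).continuousAt.continuousWithinAt) fun u hu => ?_
  rw [interior_Ioi, Set.mem_Ioi] at hu
  rw [(hderiv hu).deriv]
  exact mul_neg_of_pos_of_neg (by positivity) (two_sub_sub_add_two_mul_exp_neg_neg (by positivity))

lemma StrictAntiOn.sum_mul_comp_mul {ι : Type*} [Fintype ι] {g : ℝ → ℝ}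
    (hg : StrictAntiOn g (Set.Ioi 0)) {a κ : ι → ℝ} (ha : ∀ i, 0 ≤ a i)
    (hκ : ∀ i, 0 < κ i) (hex : ∃ i, 0 < a i) :
    StrictAntiOn (fun μ => ∑ i, a i * g (μ * κ i)) (Set.Ioi 0) := by
  intro μ₁ h₁ μ₂ h₂ h12
  have hg_lt (i : ι) : g (μ₂ * κ i) < g (μ₁ * κ i) :=
    hg (mul_pos h₁ (hκ i)) (mul_pos h₂ (hκ i)) (mul_lt_mul_of_pos_right h12 (hκ i))
  obtain ⟨i₀, hi₀⟩ := hex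
  exact sum_lt_sum (fun i _ => mul_le_mul_of_nonneg_left (hg_lt i).le (ha i))
    ⟨i₀, mem_univ _, mul_lt_mul_of_pos_left (hg_lt i₀) hi₀⟩

theorem variance_strictAnti_in_speed_general
    {ι : Type*} [Fintype ι]
    (τ₀ a₀ : ℝ) (hτ₀ : 0 < τ₀) (ha₀ : 0 < a₀)
    (a κ : ι → ℝ) (ha : ∀ Z, 0 ≤ a Z) (hκ : ∀ Z, 0 < κ Z) (hex : ∃ Z, 0 < a Z) :
    StrictAntiOn (fun μ : ℝ =>
      2 * a₀ * ∑ Z, (a Z / (μ * κ Z)) *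
        (τ₀ - 1 / (μ * κ Z) + Real.exp (-(μ * κ Z * τ₀)) / (μ * κ Z)))
      (Set.Ioi 0) := by
  have hsum := (strictAntiOn_inv_mul_sub_inv_add_exp_neg_div hτ₀).sum_mul_comp_mul ha hκ hex
  intro μ₁ h₁ μ₂ h₂ h12
  simpa only [← mul_assoc, mul_one_div] using
    mul_lt_mul_of_pos_left (hsum h₁ h₂ h12) (by positivity : 0 < 2 * a₀)

/-- Lemma 4: with `τ₀ > 0`, `a₀ > 0`, a finite nonempty index set,
coefficients `a_Z ≥ 0` (at least one positive) and rates `κ_Z > 0`, the variance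
`V(μ) = 2 a₀ Σ_Z (a_Z/(μ κ_Z)) (τ₀ - 1/(μ κ_Z) + e^(-μ κ_Z τ₀)/(μ κ_Z))`
is strictly decreasing on `μ ∈ (0, ∞)`. -/
theorem variance_strictAnti_in_speed
    {ι : Type*} [Fintype ι] [Nonempty ι]
    (τ₀ a₀ : ℝ) (hτ₀ : 0 < τ₀) (ha₀ : 0 < a₀)
    (a κ : ι → ℝ) (ha : ∀ Z, 0 ≤ a Z) (hκ : ∀ Z, 0 < κ Z) (hex : ∃ Z, 0 < a Z) :
    StrictAntiOn (fun μ : ℝ =>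
      2 * a₀ * ∑ Z, (a Z / (μ * κ Z)) *
        (τ₀ - 1 / (μ * κ Z) + Real.exp (-(μ * κ Z * τ₀)) / (μ * κ Z)))
      (Set.Ioi 0) :=
  variance_strictAnti_in_speed_general τ₀ a₀ hτ₀ ha₀ a κ ha hκ hex
end
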